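/- arXiv:2604.21123 — 4 statements merged into one kernel-verified Lean document; each statement's English description precedes it below -/
import Mathlib

section
/- Suppose A_link > 1, A_adjacency > A_link·C, and A_onehot > A_adjacency·m + A_link·C, and suppose C ≥ Δ(G) + 1. Then every global minimizer (x*, y*) of H_MGC satisfies: (iii) ∑_{c=1}^{C} x*_{v,c} = 1 for every vertex v; (ii) x*_{u,c}·x*_{v,c} = 0 for every edge {u,v} ∈ E and every color c; (i) y*_c = 1 if and only if ∑_{v∈V} x*_{v,c} ≥ 1; and (iv) the number of used colors |{c : y*_c = 1}| equals the minimum of |f(V)| over all proper colorings f of G with at most C colors. -/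
/-!
A proper coloring `f` yields a binary configuration, its one-hot encoding together with the
indicator of the used colors, of energy `|f(V)|`; a greedy coloring uses at most
`Δ + 1 ≤ C` colors, so a minimizer has energy at most `C`. All four terms are nonnegative on
binary inputs, while a violated one-hot row costs at least `A_onehot > C` and a monochromatic
edge at least `A_adjacency > C`; hence a minimizer encodes a proper coloring. Flipping `y_c`
changes the energy by `±(1 - A_link ∑_v x_{v,c})`, which forces `y` to be the indicator of the
used colors. The minimal energy is then the number of used colors, and comparing with the
configuration of any other proper coloring gives minimality.
-/

open Finset

/-- One-hot penalty term: `A_onehot · ∑_v (1 − ∑_c x_{v,c})²`. -/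
noncomputable def Honehot {V : Type*} [Fintype V] (C : ℕ) (Aoh : ℝ)
    (x : V → Fin C → ℝ) : ℝ :=
  Aoh * ∑ v : V, (1 - ∑ c : Fin C, x v c) ^ 2

/-- Adjacency penalty term: `A_adjacency · ∑_{{u,v}∈E} ∑_c x_{u,c} x_{v,c}`. -/
noncomputable def Hadjacency {V : Type*} [Fintype V] [DecidableEq V]
    (G : SimpleGraph V) [DecidableRel G.Adj] (C : ℕ) (Aadj : ℝ)
    (x : V → Fin C → ℝ) : ℝ :=
  Aadj * ∑ e ∈ G.edgeFinset,
    Sym2.lift ⟨fun u v => ∑ c : Fin C, x u c * x v c,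
      fun u v => Finset.sum_congr rfl (fun c _ => mul_comm _ _)⟩ e

/-- Color-count term: `∑_c y_c`. -/
noncomputable def Hcount (C : ℕ) (y : Fin C → ℝ) : ℝ := ∑ c : Fin C, y c

/-- Linking term: `A_link · ∑_v ∑_c x_{v,c}(1 − y_c)`. -/
noncomputable def Hlink {V : Type*} [Fintype V] (C : ℕ) (Alink : ℝ)
    (x : V → Fin C → ℝ) (y : Fin C → ℝ) : ℝ :=
  Alink * ∑ v : V, ∑ c : Fin C, x v c * (1 - y c)

/-- The one-hot QUBO Hamiltonian for minimum graph coloring. -/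
noncomputable def HMGC {V : Type*} [Fintype V] [DecidableEq V]
    (G : SimpleGraph V) [DecidableRel G.Adj] (C : ℕ) (Aoh Aadj Alink : ℝ)
    (x : V → Fin C → ℝ) (y : Fin C → ℝ) : ℝ :=
  Honehot C Aoh x + Hadjacency G C Aadj x + Hcount C y + Hlink C Alink x y

namespace SimpleGraph

variable {V : Type*} [Fintype V] (G : SimpleGraph V) [DecidableRel G.Adj]

lemma exists_color_notMem_image_neighborFinset {k : ℕ} (hk : G.maxDegree < k)
    (f : V → Fin k) (a : V) : ∃ c, c ∉ (G.neighborFinset a).image f := by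
  have hcard : #((G.neighborFinset a).image f) < #(univ : Finset (Fin k)) :=
    calc #((G.neighborFinset a).image f) ≤ G.degree a := card_image_le
      _ ≤ G.maxDegree := G.degree_le_maxDegree a
      _ < #(univ : Finset (Fin k)) := by rwa [card_univ, Fintype.card_fin]
  obtain ⟨c, -, hc⟩ := exists_mem_notMem_of_card_lt_card hcard
  exact ⟨c, hc⟩

lemma colorable_maxDegree_add_one : G.Colorable (G.maxDegree + 1) := by
  suffices ∀ s : Finset V, ∃ f : V → Fin (G.maxDegree + 1),
      ∀ u ∈ s, ∀ v ∈ s, G.Adj u v → f u ≠ f v by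
    obtain ⟨f, hf⟩ := this univ
    exact ⟨Coloring.mk f fun {u v} h => hf u (mem_univ u) v (mem_univ v) h⟩
  classical
  intro s
  induction s using Finset.induction_on with
  | empty => exact ⟨fun _ => 0, by simp⟩
  | @insert a s ha ih =>
    obtain ⟨f, hf⟩ := ih
    obtain ⟨c, hc⟩ := G.exists_color_notMem_image_neighborFinset (Nat.lt_succ_self _) f a
    have hfresh : ∀ w, G.Adj a w → f w ≠ c := fun w hw hwc =>
      hc (mem_image.mpr ⟨w, (G.mem_neighborFinset a w).mpr hw, hwc⟩)
    refine ⟨Function.update f a c, ?_⟩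
    have hne : ∀ w ∈ s, w ≠ a := fun w hw h => ha (h ▸ hw)
    intro u hu v hv huv
    rcases mem_insert.mp hu with rfl | hu' <;> rcases mem_insert.mp hv with rfl | hv'
    · exact absurd huv G.irrefl
    · simpa [hne v hv'] using (hfresh v huv).symm
    · simpa [hne u hu'] using hfresh u huv.symm
    · simpa [hne u hu', hne v hv'] using hf u hu' v hv' huv

end SimpleGraph

def IsBinary {ι : Type*} (g : ι → ℝ) : Prop := ∀ i, g i = 0 ∨ g i = 1

namespace IsBinary

variable {ι : Type*} {g : ι → ℝ}

lemma nonneg (hg : IsBinary g) (i : ι) : 0 ≤ g i := by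
  rcases hg i with h | h <;> simp [h]

lemma le_one (hg : IsBinary g) (i : ι) : g i ≤ 1 := by
  rcases hg i with h | h <;> simp [h]

lemma sum_eq_card [Fintype ι] [DecidablePred fun i => g i = 1] (hg : IsBinary g) :
    ∑ i, g i = #{i | g i = 1} := by
  rw [← sum_boole]
  exact sum_congr rfl fun i _ => by rcases hg i with h | h <;> simp [h]

lemma update [DecidableEq ι] (hg : IsBinary g) (i : ι) {b : ℝ} (hb : b = 0 ∨ b = 1) :
    IsBinary (Function.update g i b) := by
  intro j
  rcases eq_or_ne j i with rfl | hj
  · simpa using hb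
  · simpa [hj] using hg j

end IsBinary

lemma Finset.sum_mul_update_sub {ι : Type*} [Fintype ι] [DecidableEq ι] (w g : ι → ℝ) (i : ι)
    (b : ℝ) : ∑ j, w j * (Function.update g i b j - g j) = w i * (b - g i) := by
  rw [sum_eq_single i (fun j _ hj => by simp [hj]) (by simp)]
  simp

section Energy

variable {V : Type*} [Fintype V] {C : ℕ} {Aoh Aadj Alink : ℝ} {x : V → Fin C → ℝ}
  {y : Fin C → ℝ}

lemma Honehot_nonneg (hA : 0 ≤ Aoh) : 0 ≤ Honehot C Aoh x :=
  mul_nonneg hA (sum_nonneg fun _ _ => sq_nonneg _)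

lemma le_Honehot (hA : 0 ≤ Aoh) {v : V} (hv : 1 ≤ (1 - ∑ c, x v c) ^ 2) :
    Aoh ≤ Honehot C Aoh x :=
  calc Aoh = Aoh * 1 := (mul_one _).symm
    _ ≤ Aoh * (1 - ∑ c, x v c) ^ 2 := mul_le_mul_of_nonneg_left hv hA
    _ ≤ Honehot C Aoh x := mul_le_mul_of_nonneg_left
        (single_le_sum (f := fun v => (1 - ∑ c, x v c) ^ 2) (fun _ _ => sq_nonneg _)
          (mem_univ v)) hA

lemma Honehot_eq_zero (hx : ∀ v, ∑ c, x v c = 1) : Honehot C Aoh x = 0 := by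
  simp [Honehot, hx]

lemma Hcount_nonneg (hy : ∀ c, 0 ≤ y c) : 0 ≤ Hcount C y :=
  sum_nonneg fun c _ => hy c

lemma Hlink_nonneg (hA : 0 ≤ Alink) (hx : ∀ v c, 0 ≤ x v c) (hy : ∀ c, y c ≤ 1) :
    0 ≤ Hlink C Alink x y :=
  mul_nonneg hA (sum_nonneg fun v _ => sum_nonneg fun c _ =>
    mul_nonneg (hx v c) (sub_nonneg.mpr (hy c)))

lemma Hlink_eq_zero (h : ∀ v c, x v c * (1 - y c) = 0) : Hlink C Alink x y = 0 := by
  simp [Hlink, h]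

variable [DecidableEq V] (G : SimpleGraph V) [DecidableRel G.Adj]

lemma Hadjacency_nonneg (hA : 0 ≤ Aadj) (hx : ∀ v c, 0 ≤ x v c) :
    0 ≤ Hadjacency G C Aadj x := by
  refine mul_nonneg hA (sum_nonneg fun e _ => ?_)
  induction e using Sym2.ind with
  | h u v => simpa only [Sym2.lift_mk] using sum_nonneg fun c _ => mul_nonneg (hx u c) (hx v c)

lemma le_Hadjacency (hA : 0 ≤ Aadj) (hx : ∀ v c, 0 ≤ x v c) {u v : V} (huv : G.Adj u v)
    {c : Fin C} (h : 1 ≤ x u c * x v c) : Aadj ≤ Hadjacency G C Aadj x := by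
  have hedge : 1 ≤ ∑ c, x u c * x v c :=
    h.trans (single_le_sum (fun c _ => mul_nonneg (hx u c) (hx v c)) (mem_univ c))
  refine le_trans ?_ (mul_le_mul_of_nonneg_left
    (single_le_sum (fun e _ => ?_) (G.mem_edgeFinset.mpr (G.mem_edgeSet.mpr huv))) hA)
  · simpa only [Sym2.lift_mk] using le_mul_of_one_le_right hA hedge
  · induction e using Sym2.ind with
    | h u v => simpa only [Sym2.lift_mk] using sum_nonneg fun c _ => mul_nonneg (hx u c) (hx v c)

lemma Hadjacency_eq_zero (h : ∀ u v, G.Adj u v → ∀ c, x u c * x v c = 0) :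
    Hadjacency G C Aadj x = 0 := by
  refine mul_eq_zero_of_right _ (sum_eq_zero fun e he => ?_)
  induction e using Sym2.ind with
  | h u v =>
    simpa only [Sym2.lift_mk] using sum_eq_zero fun c _ => h u v (G.mem_edgeFinset.mp he) c

lemma HMGC_eq_Hcount (hone : ∀ v, ∑ c, x v c = 1)
    (hproper : ∀ u v, G.Adj u v → ∀ c, x u c * x v c = 0)
    (hlink : ∀ v c, x v c * (1 - y c) = 0) :
    HMGC G C Aoh Aadj Alink x y = Hcount C y := by
  simp [HMGC, Honehot_eq_zero hone, Hadjacency_eq_zero G hproper, Hlink_eq_zero hlink]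

lemma HMGC_update_sub (c : Fin C) (b : ℝ) :
    HMGC G C Aoh Aadj Alink x (Function.update y c b) - HMGC G C Aoh Aadj Alink x y
      = (b - y c) * (1 - Alink * ∑ v, x v c) := by
  have hcount := sum_mul_update_sub 1 y c b
  have hlink : ∑ v, ∑ j, x v j * (1 - Function.update y c b j)
      = ∑ v, ∑ j, x v j * (1 - y j) - (b - y c) * ∑ v, x v c := by
    rw [mul_sum, ← sum_sub_distrib]
    refine sum_congr rfl fun v _ => ?_
    rw [mul_comm, ← sum_mul_update_sub (x v) y c b, ← sum_sub_distrib]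
    exact sum_congr rfl fun j _ => by ring
  simp only [Pi.one_apply, one_mul, sum_sub_distrib] at hcount
  simp only [HMGC, Hcount, Hlink, hlink]
  linear_combination hcount

end Energy

section Coloring

variable {V : Type*} {C : ℕ}

def oneHot (f : V → Fin C) : V → Fin C → ℝ := fun v c => if f v = c then 1 else 0

lemma isBinary_oneHot (f : V → Fin C) (v : V) : IsBinary (oneHot f v) := fun c => by
  by_cases h : f v = c <;> simp [oneHot, h]

lemma oneHot_mul_eq_zero_iff_ne (f : V → Fin C) (u v : V) :
    (∀ c, oneHot f u c * oneHot f v c = 0) ↔ f u ≠ f v := by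
  simp [oneHot]

lemma exists_eq_oneHot {x : V → Fin C → ℝ} (hx : ∀ v, IsBinary (x v))
    (hone : ∀ v, ∑ c, x v c = 1) : ∃ f : V → Fin C, x = oneHot f := by
  have hsingle : ∀ v, ∃ c, ({c | x v c = 1} : Finset (Fin C)) = {c} := fun v =>
    card_eq_one.mp (by exact_mod_cast (hx v).sum_eq_card.symm.trans (hone v))
  choose f hf using hsingle
  refine ⟨f, funext fun v => funext fun c => ?_⟩
  have hmem := congrArg (c ∈ ·) (hf v)
  simp only [mem_filter, mem_univ, true_and, mem_singleton, eq_iff_iff] at hmem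
  rcases hx v c with h | h <;> simp [oneHot, h, ← hmem, eq_comm]

variable [Fintype V]

def usedColors (f : V → Fin C) : Fin C → ℝ := fun c => if c ∈ univ.image f then 1 else 0

lemma isBinary_usedColors (f : V → Fin C) : IsBinary (usedColors f) := fun c => by
  by_cases h : c ∈ univ.image f <;> simp only [usedColors, h, if_true, if_false] <;> simp

lemma one_le_sum_oneHot_iff (f : V → Fin C) (c : Fin C) :
    1 ≤ ∑ v, oneHot f v c ↔ c ∈ univ.image f := by
  simp [oneHot, sum_boole, Nat.one_le_iff_ne_zero, filter_eq_empty_iff]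

variable [DecidableEq V] {G : SimpleGraph V} [DecidableRel G.Adj] {Aoh Aadj Alink : ℝ}

lemma HMGC_oneHot_usedColors {f : V → Fin C} (hf : ∀ u v, G.Adj u v → f u ≠ f v) :
    HMGC G C Aoh Aadj Alink (oneHot f) (usedColors f) = #(univ.image f) := by
  rw [HMGC_eq_Hcount G (fun v => by simp [oneHot])
    (fun u v huv => (oneHot_mul_eq_zero_iff_ne f u v).mpr (hf u v huv))]
  · simp [Hcount, usedColors, sum_boole]
  · intro v c
    by_cases h : f v = c
    · simp [oneHot, usedColors, h.symm]
    · simp [oneHot, h]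

end Coloring

lemma one_le_one_sub_sq_of_ne_one {n : ℕ} (hn : n ≠ 1) : 1 ≤ (1 - (n : ℝ)) ^ 2 := by
  rcases Nat.lt_or_ge n 1 with h | h
  · simp [Nat.lt_one_iff.mp h]
  · have : (2 : ℝ) ≤ n := by exact_mod_cast (by omega : 2 ≤ n)
    nlinarith

section Minimizer

variable {V : Type*} [Fintype V] [DecidableEq V] {G : SimpleGraph V} [DecidableRel G.Adj]
  {C : ℕ} {Aoh Aadj Alink : ℝ} {x : V → Fin C → ℝ} {y : Fin C → ℝ}

lemma sum_eq_one_of_HMGC_lt (hx : ∀ v, IsBinary (x v)) (hy : IsBinary y) (hoh : 0 ≤ Aoh)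
    (hadj : 0 ≤ Aadj) (hlink : 0 ≤ Alink) (hH : HMGC G C Aoh Aadj Alink x y < Aoh) (v : V) :
    ∑ c, x v c = 1 := by
  by_contra hv
  rw [(hx v).sum_eq_card] at hv
  have hoh_le := le_Honehot (C := C) (x := x) hoh (v := v)
    (by rw [(hx v).sum_eq_card]; exact one_le_one_sub_sq_of_ne_one (by exact_mod_cast hv))
  have := Hadjacency_nonneg G hadj fun v => (hx v).nonneg
  have := Hcount_nonneg hy.nonneg
  have := Hlink_nonneg (y := y) hlink (fun v => (hx v).nonneg) hy.le_one
  simp only [HMGC] at hH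
  linarith

lemma mul_eq_zero_of_HMGC_lt (hx : ∀ v, IsBinary (x v)) (hy : IsBinary y) (hoh : 0 ≤ Aoh)
    (hadj : 0 ≤ Aadj) (hlink : 0 ≤ Alink) (hH : HMGC G C Aoh Aadj Alink x y < Aadj)
    {u v : V} (huv : G.Adj u v) (c : Fin C) : x u c * x v c = 0 := by
  by_contra hne
  have hone : x u c * x v c = 1 := by
    rcases hx u c with h | h <;> rcases hx v c with h' | h' <;> simp_all
  have hadj_le := le_Hadjacency G hadj (fun v => (hx v).nonneg) huv hone.ge
  have := Honehot_nonneg (C := C) (x := x) hoh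
  have := Hcount_nonneg hy.nonneg
  have := Hlink_nonneg (y := y) hlink (fun v => (hx v).nonneg) hy.le_one
  simp only [HMGC] at hH
  linarith

lemma eq_one_iff_one_le_sum_of_minimal (hx : ∀ v, IsBinary (x v)) (hy : IsBinary y)
    (hA : 1 < Alink)
    (hmin : ∀ y', IsBinary y' → HMGC G C Aoh Aadj Alink x y ≤ HMGC G C Aoh Aadj Alink x y')
    (c : Fin C) : y c = 1 ↔ 1 ≤ ∑ v, x v c := by
  have hflip : ∀ b : ℝ, (b = 0 ∨ b = 1) → 0 ≤ (b - y c) * (1 - Alink * ∑ v, x v c) :=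
    fun b hb => by
      rw [← HMGC_update_sub G]
      exact sub_nonneg.mpr (hmin _ (hy.update c hb))
  have hcol : IsBinary fun v => x v c := fun v => hx v c
  rw [hcol.sum_eq_card] at hflip ⊢
  rcases hy c with h | h
  · have := hflip 1 (Or.inr rfl)
    simp only [h, sub_zero, one_mul, sub_nonneg] at this
    refine iff_of_false (by simp [h]) fun hle => ?_
    nlinarith
  · have := hflip 0 (Or.inl rfl)
    simp only [h] at this
    refine iff_of_true h ?_
    have hpos : (0 : ℝ) < #{v | x v c = 1} := by nlinarith
    exact_mod_cast hpos

lemma HMGC_le_card_image_of_minimal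
    (hmin : ∀ x' y', (∀ v, IsBinary (x' v)) → IsBinary y' →
      HMGC G C Aoh Aadj Alink x y ≤ HMGC G C Aoh Aadj Alink x' y')
    {f : V → Fin C} (hf : ∀ u v, G.Adj u v → f u ≠ f v) :
    HMGC G C Aoh Aadj Alink x y ≤ #(univ.image f) := by
  rw [← HMGC_oneHot_usedColors hf]
  exact hmin _ _ (isBinary_oneHot f) (isBinary_usedColors f)

end Minimizer

open Classical in
theorem onehot_penalties_sufficient_general
    {V : Type*} [Fintype V] [DecidableEq V]
    (G : SimpleGraph V) [DecidableRel G.Adj]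
    (C : ℕ) (hCdeg : G.maxDegree + 1 ≤ C)
    (Aoh Aadj Alink : ℝ)
    (h1 : 1 < Alink)
    (h2 : Alink * (C : ℝ) < Aadj)
    (h3 : Aadj * (G.edgeFinset.card : ℝ) + Alink * (C : ℝ) < Aoh)
    (x : V → Fin C → ℝ) (y : Fin C → ℝ)
    (hx : ∀ v c, x v c = 0 ∨ x v c = 1) (hy : ∀ c, y c = 0 ∨ y c = 1)
    (hmin : ∀ (x' : V → Fin C → ℝ) (y' : Fin C → ℝ),
      (∀ v c, x' v c = 0 ∨ x' v c = 1) → (∀ c, y' c = 0 ∨ y' c = 1) →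
      HMGC G C Aoh Aadj Alink x y ≤ HMGC G C Aoh Aadj Alink x' y') :
    (∀ v : V, ∑ c : Fin C, x v c = 1) ∧
    (∀ u v : V, G.Adj u v → ∀ c : Fin C, x u c * x v c = 0) ∧
    (∀ c : Fin C, y c = 1 ↔ 1 ≤ ∑ v : V, x v c) ∧
    IsLeast
      {k : ℕ | ∃ f : V → Fin C, (∀ u v, G.Adj u v → f u ≠ f v) ∧
        (Finset.univ.image f).card = k}
      ((Finset.univ.filter fun c : Fin C => y c = 1).card) := by
  have hC : (0 : ℝ) ≤ C := C.cast_nonneg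
  have hC_lt_Aadj : (C : ℝ) < Aadj := by nlinarith
  have hC_lt_Aoh : (C : ℝ) < Aoh := by nlinarith [(#G.edgeFinset).cast_nonneg (α := ℝ)]
  obtain ⟨g⟩ := G.colorable_maxDegree_add_one.mono hCdeg
  have hH_le_C : HMGC G C Aoh Aadj Alink x y ≤ C :=
    (HMGC_le_card_image_of_minimal hmin fun _ _ h => g.valid h).trans
      (by simpa using card_le_univ (univ.image g))
  have hAoh : 0 ≤ Aoh := by linarith
  have hAadj : 0 ≤ Aadj := by linarith
  have hAlink : 0 ≤ Alink := by linarith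
  have hone := sum_eq_one_of_HMGC_lt hx hy hAoh hAadj hAlink (hH_le_C.trans_lt hC_lt_Aoh)
  have hproper u v (huv : G.Adj u v) :=
    mul_eq_zero_of_HMGC_lt hx hy hAoh hAadj hAlink (hH_le_C.trans_lt hC_lt_Aadj) huv
  have hused := eq_one_iff_one_le_sum_of_minimal hx hy h1 (hmin x · hx)
  refine ⟨hone, @hproper, hused, ?_⟩
  obtain ⟨f, rfl⟩ := exists_eq_oneHot hx hone
  have hf u v (huv : G.Adj u v) : f u ≠ f v :=
    (oneHot_mul_eq_zero_iff_ne f u v).mp (hproper u v huv)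
  have himage : ({c | y c = 1} : Finset (Fin C)) = univ.image f := by
    ext c
    simp [hused, one_le_sum_oneHot_iff]
  have hy_eq : y = usedColors f := funext fun c => by
    rcases hy c with h | h <;> simp [usedColors, ← himage, h]
  rw [himage]
  refine ⟨⟨f, hf, rfl⟩, ?_⟩
  rintro k ⟨f', hf', rfl⟩
  have := HMGC_le_card_image_of_minimal hmin hf'
  rwa [hy_eq, HMGC_oneHot_usedColors hf, Nat.cast_le] at this

open Classical in
/-- Sufficient one-hot QUBO penalties for minimum graph coloring:
every global minimizer is one-hot, properly colored, has faithful indicators,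
and uses the minimum possible number of colors. -/
theorem onehot_penalties_sufficient
    {V : Type*} [Fintype V] [DecidableEq V] [Nonempty V]
    (G : SimpleGraph V) [DecidableRel G.Adj]
    (C : ℕ) (hC : 1 ≤ C) (hCdeg : G.maxDegree + 1 ≤ C)
    (Aoh Aadj Alink : ℝ)
    (hAohpos : 0 < Aoh) (hAadjpos : 0 < Aadj) (hAlinkpos : 0 < Alink)
    (h1 : 1 < Alink)
    (h2 : Alink * (C : ℝ) < Aadj)
    (h3 : Aadj * (G.edgeFinset.card : ℝ) + Alink * (C : ℝ) < Aoh)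
    (x : V → Fin C → ℝ) (y : Fin C → ℝ)
    (hx : ∀ v c, x v c = 0 ∨ x v c = 1) (hy : ∀ c, y c = 0 ∨ y c = 1)
    (hmin : ∀ (x' : V → Fin C → ℝ) (y' : Fin C → ℝ),
      (∀ v c, x' v c = 0 ∨ x' v c = 1) → (∀ c, y' c = 0 ∨ y' c = 1) →
      HMGC G C Aoh Aadj Alink x y ≤ HMGC G C Aoh Aadj Alink x' y') :
    (∀ v : V, ∑ c : Fin C, x v c = 1) ∧
    (∀ u v : V, G.Adj u v → ∀ c : Fin C, x u c * x v c = 0) ∧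
    (∀ c : Fin C, y c = 1 ↔ 1 ≤ ∑ v : V, x v c) ∧
    IsLeast
      {k : ℕ | ∃ f : V → Fin C, (∀ u v, G.Adj u v → f u ≠ f v) ∧
        (Finset.univ.image f).card = k}
      ((Finset.univ.filter fun c : Fin C => y c = 1).card) :=
  onehot_penalties_sufficient_general G C hCdeg Aoh Aadj Alink h1 h2 h3 x y hx hy hmin
end

section
/- Suppose A_link > 1. Let x be a one-hot assignment, and define y* by y*_c = 1 if ∑_{v∈V} x_{v,c} ≥ 1 and y*_c = 0 otherwise. Then for every y ∈ {0,1}^{[C]} with y ≠ y*, one has H_count(y*) + H_link(x, y*) < H_count(y) + H_link(x, y); that is, the faithful indicator vector y* is the unique minimizer of H_count + H_link for fixed one-hot x. -/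
open Finset

open Classical in
/-- The faithful indicator vector `y*`, where `y*_c = 1` iff color `c` is used by `x`. -/
noncomputable def ystar {V : Type*} [Fintype V] (C : ℕ) (x : V → Fin C → ℝ) :
    Fin C → ℝ :=
  fun c => if 1 ≤ ∑ v : V, x v c then 1 else 0

/-- For a fixed one-hot assignment `x`, the faithful indicator vector `y*` is the
unique minimizer of `H_count + H_link` among binary indicator vectors. -/
theorem faithful_indicators_unique_min
    {V : Type*} [Fintype V] [Nonempty V]
    (C : ℕ) (hC : 1 ≤ C) (Alink : ℝ) (hAlinkpos : 0 < Alink) (h1 : 1 < Alink)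
    (x : V → Fin C → ℝ)
    (hx : ∀ v c, x v c = 0 ∨ x v c = 1)
    (honehot : ∀ v : V, ∑ c : Fin C, x v c = 1)
    (y : Fin C → ℝ) (hy : ∀ c, y c = 0 ∨ y c = 1)
    (hne : y ≠ ystar C x) :
    Hcount C (ystar C x) + Hlink C Alink x (ystar C x) <
      Hcount C y + Hlink C Alink x y := by

  classical
  have hxnn : ∀ v c, (0:ℝ) ≤ x v c := fun v c => by rcases hx v c with h|h <;> simp [h]
  have hS0 : ∀ c : Fin C, ¬ (1 ≤ ∑ v : V, x v c) → ∑ v : V, x v c = 0 := by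
    intro c hc
    by_contra h
    have hex : ∃ v ∈ Finset.univ, x v c ≠ 0 := by
      by_contra hall
      push_neg at hall
      exact h (Finset.sum_eq_zero fun v hv => hall v hv)
    obtain ⟨v, -, hv⟩ := hex
    have hv1 : x v c = 1 := (hx v c).resolve_left hv
    have hle := Finset.single_le_sum (f := fun w => x w c) (fun w _ => hxnn w c)
      (Finset.mem_univ v)
    simp only [hv1] at hle
    exact hc hle
  have key : ∀ z : Fin C → ℝ, Hcount C z + Hlink C Alink x z
      = ∑ c : Fin C, (z c + Alink * (∑ v : V, x v c) * (1 - z c)) := by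
    intro z
    unfold Hcount Hlink
    rw [Finset.sum_comm, Finset.mul_sum, ← Finset.sum_add_distrib]
    refine Finset.sum_congr rfl fun c _ => ?_
    rw [← Finset.sum_mul]; ring
  rw [key, key]
  refine Finset.sum_lt_sum (fun c _ => ?_) ?_
  · by_cases h : 1 ≤ ∑ v : V, x v c
    · simp only [ystar, if_pos h]
      rcases hy c with h0 | h0 <;> rw [h0] <;> nlinarith
    · have hz := hS0 c h
      simp only [ystar, hz]
      rw [if_neg (by norm_num : ¬ (1:ℝ) ≤ 0)]
      rcases hy c with h0 | h0 <;> rw [h0] <;> nlinarith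
  · have : ∃ c : Fin C, y c ≠ ystar C x c := by
      by_contra hall
      push_neg at hall
      exact hne (funext hall)
    obtain ⟨c, hc⟩ := this
    refine ⟨c, Finset.mem_univ c, ?_⟩
    by_cases h : 1 ≤ ∑ v : V, x v c
    · have hys : ystar C x c = 1 := by simp [ystar, if_pos h]
      rw [hys] at hc ⊢
      rcases hy c with h0 | h0
      · rw [h0]; nlinarith
      · exact absurd h0 hc
    · have hz := hS0 c h
      have hys : ystar C x c = 0 := by simp [ystar, if_neg h]
      rw [hys] at hc ⊢
      rw [hz]
      rcases hy c with h0 | h0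
      · exact absurd h0 hc
      · rw [h0]; nlinarith
end

section
/- Suppose the penalties P_1, …, P_L are lexicographically admissible, A > n · ∑_{k=1}^{L} P_k, and there exists at least one feasible assignment. Then every global minimizer x* of H_MGC^log is feasible; that is, ∑_{{u,v}∈E} ∏_{k=1}^{L} (x*_{u,k} ⊙ x*_{v,k}) = 0, so no edge of G joins two vertices with identical bitstrings. -/
open Finset

/-- Adjacency term of the logarithmic HUBO:
`A · ∑_{{u,v}∈E} ∏_{k=1}^{L} (x_{u,k} ⊙ x_{v,k})`,
where `a ⊙ b = 2ab − a − b + 1` is the XNOR of bits. -/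
noncomputable def HadjLog {V : Type*} [Fintype V] [DecidableEq V]
    (G : SimpleGraph V) [DecidableRel G.Adj] (L : ℕ) (A : ℝ)
    (x : V → ℕ → ℝ) : ℝ :=
  A * ∑ e ∈ G.edgeFinset,
    Sym2.lift
      ⟨fun u v => ∏ k ∈ Finset.Icc 1 L,
          (2 * x u k * x v k - x u k - x v k + 1),
        fun _ _ => Finset.prod_congr rfl (fun _ _ => by ring)⟩ e

/-- Lexicographic penalty term: `∑_{k=1}^{L} P_k ∑_{v∈V} x_{v,k}`. -/
noncomputable def HlexLog {V : Type*} [Fintype V] (L : ℕ) (P : ℕ → ℝ)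
    (x : V → ℕ → ℝ) : ℝ :=
  ∑ k ∈ Finset.Icc 1 L, P k * ∑ v : V, x v k

/-- The logarithmic HUBO for minimum graph coloring. -/
noncomputable def HMGClog {V : Type*} [Fintype V] [DecidableEq V]
    (G : SimpleGraph V) [DecidableRel G.Adj] (L : ℕ) (A : ℝ) (P : ℕ → ℝ)
    (x : V → ℕ → ℝ) : ℝ :=
  HadjLog G L A x + HlexLog L P x

/-- An assignment is feasible if every edge gets two distinct bitstrings. -/
def FeasibleLog {V : Type*} (G : SimpleGraph V) (L : ℕ) (x : V → ℕ → ℝ) : Prop :=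
  ∀ u v : V, G.Adj u v → ∃ k ∈ Finset.Icc 1 L, x u k ≠ x v k

open Classical in
private lemma term_eq {V : Type*} (L : ℕ) (y : V → ℕ → ℝ)
    (hy : ∀ v, ∀ k ∈ Finset.Icc 1 L, y v k = 0 ∨ y v k = 1) (u v : V) :
    (∏ k ∈ Finset.Icc 1 L, (2 * y u k * y v k - y u k - y v k + 1)) =
      (if ∃ k ∈ Finset.Icc 1 L, y u k ≠ y v k then 0 else 1) := by
  by_cases h : ∃ k ∈ Finset.Icc 1 L, y u k ≠ y v k
  · rw [if_pos h]
    obtain ⟨k, hk, hne⟩ := h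
    apply Finset.prod_eq_zero hk
    rcases hy u k hk with h1 | h1 <;> rcases hy v k hk with h2 | h2
    · exact absurd (h1.trans h2.symm) hne
    · rw [h1, h2]; ring
    · rw [h1, h2]; ring
    · exact absurd (h1.trans h2.symm) hne
  · rw [if_neg h]
    push_neg at h
    apply Finset.prod_eq_one
    intro k hk
    rw [h k hk]
    rcases hy v k hk with h2 | h2 <;> rw [h2] <;> ring

/-- With lexicographically admissible penalties and `A > n·∑_k P_k`, every
global minimizer of the logarithmic HUBO is feasible: no edge joins two
vertices with identical bitstrings, i.e. the adjacency sum vanishes. -/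
theorem log_minimizer_feasible
    {V : Type*} [Fintype V] [DecidableEq V] [Nonempty V]
    (G : SimpleGraph V) [DecidableRel G.Adj]
    (L : ℕ) (hL : 1 ≤ L)
    (A : ℝ) (hApos : 0 < A)
    (P : ℕ → ℝ) (hPpos : ∀ k ∈ Finset.Icc 1 L, 0 < P k)
    (hadm : ∀ k ∈ Finset.Icc 1 (L - 1),
      (Fintype.card V : ℝ) * ∑ j ∈ Finset.Icc 1 k, P j < P (k + 1))
    (hA : (Fintype.card V : ℝ) * ∑ k ∈ Finset.Icc 1 L, P k < A)
    (hfeas : ∃ x0 : V → ℕ → ℝ,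
      (∀ v, ∀ k ∈ Finset.Icc 1 L, x0 v k = 0 ∨ x0 v k = 1) ∧
      FeasibleLog G L x0)
    (x : V → ℕ → ℝ)
    (hx : ∀ v, ∀ k ∈ Finset.Icc 1 L, x v k = 0 ∨ x v k = 1)
    (hmin : ∀ x' : V → ℕ → ℝ,
      (∀ v, ∀ k ∈ Finset.Icc 1 L, x' v k = 0 ∨ x' v k = 1) →
      HMGClog G L A P x ≤ HMGClog G L A P x') :
    (∑ e ∈ G.edgeFinset,
      Sym2.lift
        ⟨fun u v => ∏ k ∈ Finset.Icc 1 L,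
            (2 * x u k * x v k - x u k - x v k + 1),
          fun _ _ => Finset.prod_congr rfl (fun _ _ => by ring)⟩ e) = 0 ∧
    FeasibleLog G L x := by
  obtain ⟨x0, hx0b, hx0f⟩ := hfeas
  set f : (V → ℕ → ℝ) → Sym2 V → ℝ := fun y e =>
    Sym2.lift
      ⟨fun u v => ∏ k ∈ Finset.Icc 1 L,
          (2 * y u k * y v k - y u k - y v k + 1),
        fun _ _ => Finset.prod_congr rfl (fun _ _ => by ring)⟩ e with hf
  -- each term is 0 or 1 for binary assignments
  have hterm01 : ∀ (y : V → ℕ → ℝ),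
      (∀ v, ∀ k ∈ Finset.Icc 1 L, y v k = 0 ∨ y v k = 1) →
      ∀ e : Sym2 V, f y e = 0 ∨ f y e = 1 := by
    intro y hy e
    induction e using Sym2.ind with
    | _ u v =>
      simp only [hf, Sym2.lift_mk]
      rw [term_eq L y hy u v]
      split <;> simp
  have htermnn : ∀ (y : V → ℕ → ℝ),
      (∀ v, ∀ k ∈ Finset.Icc 1 L, y v k = 0 ∨ y v k = 1) →
      ∀ e : Sym2 V, 0 ≤ f y e := by
    intro y hy e
    rcases hterm01 y hy e with h | h <;> rw [h] <;> norm_num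
  -- adjacency sum of a feasible binary assignment vanishes
  have hsum0 : ∀ (y : V → ℕ → ℝ),
      (∀ v, ∀ k ∈ Finset.Icc 1 L, y v k = 0 ∨ y v k = 1) →
      FeasibleLog G L y →
      (∑ e ∈ G.edgeFinset, f y e) = 0 := by
    intro y hy hyf
    apply Finset.sum_eq_zero
    intro e he
    induction e using Sym2.ind with
    | _ u v =>
      rw [SimpleGraph.mem_edgeFinset, SimpleGraph.mem_edgeSet] at he
      simp only [hf, Sym2.lift_mk]
      rw [term_eq L y hy u v, if_pos (hyf u v he)]
  -- Hlex bounds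
  have hlex_nonneg : 0 ≤ HlexLog L P x := by
    apply Finset.sum_nonneg
    intro k hk
    apply mul_nonneg (hPpos k hk).le
    apply Finset.sum_nonneg
    intro v _
    rcases hx v k hk with h | h <;> rw [h] <;> norm_num
  have hlex_le : HlexLog L P x0 ≤ (Fintype.card V : ℝ) * ∑ k ∈ Finset.Icc 1 L, P k := by
    rw [Finset.mul_sum]
    apply Finset.sum_le_sum
    intro k hk
    rw [mul_comm ((Fintype.card V : ℝ)) (P k)]
    apply mul_le_mul_of_nonneg_left _ (hPpos k hk).le
    calc ∑ v : V, x0 v k ≤ ∑ _v : V, (1 : ℝ) := by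
          apply Finset.sum_le_sum
          intro v _
          rcases hx0b v k hk with h | h <;> rw [h] <;> norm_num
      _ = (Fintype.card V : ℝ) := by simp
  -- value at x0
  have hHx0 : HMGClog G L A P x0 ≤ (Fintype.card V : ℝ) * ∑ k ∈ Finset.Icc 1 L, P k := by
    have : HadjLog G L A x0 = 0 := by
      rw [HadjLog]
      rw [show (∑ e ∈ G.edgeFinset, _) = (∑ e ∈ G.edgeFinset, f x0 e) from rfl]
      rw [hsum0 x0 hx0b hx0f, mul_zero]
    rw [HMGClog, this, zero_add]
    exact hlex_le
  have hle : HMGClog G L A P x ≤ (Fintype.card V : ℝ) * ∑ k ∈ Finset.Icc 1 L, P k :=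
    le_trans (hmin x0 hx0b) hHx0
  -- x is feasible
  have hxfeas : FeasibleLog G L x := by
    by_contra hcon
    rw [FeasibleLog] at hcon
    push_neg at hcon
    obtain ⟨u, v, huv, hall⟩ := hcon
    have he : s(u, v) ∈ G.edgeFinset := by
      rw [SimpleGraph.mem_edgeFinset, SimpleGraph.mem_edgeSet]; exact huv
    have hval : f x s(u, v) = 1 := by
      simp only [hf, Sym2.lift_mk]
      rw [term_eq L x hx u v, if_neg]
      push_neg
      exact hall
    have hS : (1 : ℝ) ≤ ∑ e ∈ G.edgeFinset, f x e := by
      rw [← hval]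
      exact Finset.single_le_sum (fun e _ => htermnn x hx e) he
    have hadj : A ≤ HadjLog G L A x := by
      rw [HadjLog]
      rw [show (∑ e ∈ G.edgeFinset, _) = (∑ e ∈ G.edgeFinset, f x e) from rfl]
      calc A = A * 1 := (mul_one A).symm
        _ ≤ A * ∑ e ∈ G.edgeFinset, f x e := by
            apply mul_le_mul_of_nonneg_left hS hApos.le
    have : A ≤ (Fintype.card V : ℝ) * ∑ k ∈ Finset.Icc 1 L, P k := by
      calc A ≤ HadjLog G L A x := hadj
        _ ≤ HMGClog G L A P x := by rw [HMGClog]; linarith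
        _ ≤ _ := hle
    linarith
  refine ⟨?_, hxfeas⟩
  exact hsum0 x hx hxfeas
end

section
/- Suppose the penalties P_1, …, P_L are lexicographically admissible, A > n · ∑_{k=1}^{L} P_k, and there exists at least one feasible assignment. Then every global minimizer x* of H_MGC^log is feasible, and among all feasible assignments x, the index-population vector (s_L(x*), …, s_1(x*)) is lexicographically minimal: there is no feasible assignment x whose index-population vector is lexicographically smaller than that of x*. -/
open Finset

section AuxHelpers

set_option linter.unusedSectionVars false

lemma xnor01 {a b : ℝ} (ha : a = 0 ∨ a = 1) (hb : b = 0 ∨ b = 1) :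
    (a = b ∧ 2*a*b - a - b + 1 = 1) ∨ (a ≠ b ∧ 2*a*b - a - b + 1 = 0) := by
  rcases ha with rfl|rfl <;> rcases hb with rfl|rfl <;> norm_num

variable {V : Type*} [Fintype V] [DecidableEq V]

lemma edgeProd_nonneg (L : ℕ) (x : V → ℕ → ℝ)
    (hx : ∀ v, ∀ k ∈ Finset.Icc 1 L, x v k = 0 ∨ x v k = 1) (u v : V) :
    0 ≤ ∏ k ∈ Finset.Icc 1 L, (2 * x u k * x v k - x u k - x v k + 1) := by
  apply Finset.prod_nonneg
  intro k hk
  rcases xnor01 (hx u k hk) (hx v k hk) with ⟨_, h⟩|⟨_, h⟩ <;> rw [h] <;> norm_num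

lemma edgeProd_eq_zero (L : ℕ) (x : V → ℕ → ℝ)
    (hx : ∀ v, ∀ k ∈ Finset.Icc 1 L, x v k = 0 ∨ x v k = 1) (u v : V)
    (k : ℕ) (hk : k ∈ Finset.Icc 1 L) (hne : x u k ≠ x v k) :
    ∏ k ∈ Finset.Icc 1 L, (2 * x u k * x v k - x u k - x v k + 1) = 0 := by
  apply Finset.prod_eq_zero hk
  rcases xnor01 (hx u k hk) (hx v k hk) with ⟨h, _⟩|⟨_, h⟩
  · exact absurd h hne
  · exact h

lemma edgeProd_eq_one (L : ℕ) (x : V → ℕ → ℝ)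
    (hx : ∀ v, ∀ k ∈ Finset.Icc 1 L, x v k = 0 ∨ x v k = 1) (u v : V)
    (heq : ∀ k ∈ Finset.Icc 1 L, x u k = x v k) :
    ∏ k ∈ Finset.Icc 1 L, (2 * x u k * x v k - x u k - x v k + 1) = 1 := by
  apply Finset.prod_eq_one
  intro k hk
  rcases xnor01 (hx u k hk) (hx v k hk) with ⟨_, h⟩|⟨h, _⟩
  · exact h
  · exact absurd (heq k hk) h

lemma sum_binary_nat (y : V → ℝ) (hy : ∀ v, y v = 0 ∨ y v = 1) :
    ∃ m : ℕ, ∑ v, y v = (m : ℝ) := by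
  classical
  refine ⟨(Finset.univ.filter fun v => y v = 1).card, ?_⟩
  rw [← Finset.sum_filter_add_sum_filter_not Finset.univ (fun v => y v = 1)]
  rw [Finset.sum_congr rfl (fun v hv => (Finset.mem_filter.mp hv).2)]
  rw [Finset.sum_eq_zero (fun v hv => (hy v).resolve_right (Finset.mem_filter.mp hv).2)]
  simp

lemma binary_sum_lt (y z : V → ℝ) (hy : ∀ v, y v = 0 ∨ y v = 1)
    (hz : ∀ v, z v = 0 ∨ z v = 1) (h : ∑ v, y v < ∑ v, z v) :
    ∑ v, y v ≤ (∑ v, z v) - 1 := by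
  obtain ⟨m, hm⟩ := sum_binary_nat y hy
  obtain ⟨m', hm'⟩ := sum_binary_nat z hz
  rw [hm, hm'] at h ⊢
  have h1 : m + 1 ≤ m' := by exact_mod_cast h
  have h2 : (m : ℝ) + 1 ≤ (m' : ℝ) := by exact_mod_cast h1
  linarith

lemma sum_binary_nonneg (y : V → ℝ) (hy : ∀ v, y v = 0 ∨ y v = 1) :
    0 ≤ ∑ v, y v :=
  Finset.sum_nonneg fun v _ => by rcases hy v with h|h <;> rw [h] <;> norm_num

lemma sum_binary_le_card (y : V → ℝ) (hy : ∀ v, y v = 0 ∨ y v = 1) :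
    ∑ v, y v ≤ (Fintype.card V : ℝ) := by
  calc ∑ v, y v ≤ ∑ _v : V, (1:ℝ) :=
        Finset.sum_le_sum fun v _ => by rcases hy v with h|h <;> rw [h] <;> norm_num
    _ = (Fintype.card V : ℝ) := by simp

lemma sum_Icc_split (t L : ℕ) (h2 : t ≤ L) (f : ℕ → ℝ) :
    ∑ k ∈ Icc 1 L, f k = ∑ k ∈ Icc 1 t, f k + ∑ k ∈ Ioc t L, f k := by
  rw [show Icc 1 L = Ioc 0 L from (Finset.Icc_add_one_left_eq_Ioc 0 L),
      show Icc 1 t = Ioc 0 t from (Finset.Icc_add_one_left_eq_Ioc 0 t)]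
  exact (Finset.sum_Ioc_consecutive f (Nat.zero_le t) h2).symm

lemma sum_Icc_top (t : ℕ) (h : 1 ≤ t) (f : ℕ → ℝ) :
    ∑ k ∈ Icc 1 t, f k = (∑ k ∈ Icc 1 (t-1), f k) + f t := by
  obtain ⟨s, rfl⟩ := Nat.exists_eq_add_of_le' h
  simpa using Finset.sum_Icc_succ_top (Nat.le_add_left 1 s) f

lemma HadjLog_eq_zero_of_feasible (G : SimpleGraph V) [DecidableRel G.Adj]
    (L : ℕ) (A : ℝ) (x : V → ℕ → ℝ)
    (hx : ∀ v, ∀ k ∈ Finset.Icc 1 L, x v k = 0 ∨ x v k = 1)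
    (hfeas : FeasibleLog G L x) :
    HadjLog G L A x = 0 := by
  unfold HadjLog
  rw [Finset.sum_eq_zero, mul_zero]
  intro e he
  induction e using Sym2.ind with
  | _ u v =>
    rw [Sym2.lift_mk]
    obtain ⟨k, hk, hne⟩ := hfeas u v (SimpleGraph.mem_edgeFinset.mp he)
    exact edgeProd_eq_zero L x hx u v k hk hne

lemma HadjLog_nonneg (G : SimpleGraph V) [DecidableRel G.Adj]
    (L : ℕ) (A : ℝ) (hA : 0 ≤ A) (x : V → ℕ → ℝ)
    (hx : ∀ v, ∀ k ∈ Finset.Icc 1 L, x v k = 0 ∨ x v k = 1) :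
    0 ≤ HadjLog G L A x := by
  apply mul_nonneg hA
  apply Finset.sum_nonneg
  intro e he
  induction e using Sym2.ind with
  | _ u v =>
    rw [Sym2.lift_mk]
    exact edgeProd_nonneg L x hx u v

lemma HadjLog_ge_of_infeasible (G : SimpleGraph V) [DecidableRel G.Adj]
    (L : ℕ) (A : ℝ) (hA : 0 ≤ A) (x : V → ℕ → ℝ)
    (hx : ∀ v, ∀ k ∈ Finset.Icc 1 L, x v k = 0 ∨ x v k = 1)
    (u v : V) (huv : G.Adj u v)
    (heq : ∀ k ∈ Finset.Icc 1 L, x u k = x v k) :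
    A ≤ HadjLog G L A x := by
  unfold HadjLog
  have hmem : s(u, v) ∈ G.edgeFinset := SimpleGraph.mem_edgeFinset.mpr huv
  have h1 : (1 : ℝ) ≤ ∑ e ∈ G.edgeFinset,
      Sym2.lift
        ⟨fun u v => ∏ k ∈ Finset.Icc 1 L,
            (2 * x u k * x v k - x u k - x v k + 1),
          fun _ _ => Finset.prod_congr rfl (fun _ _ => by ring)⟩ e := by
    have := Finset.single_le_sum (f := fun e => Sym2.lift
        ⟨fun u v => ∏ k ∈ Finset.Icc 1 L,
            (2 * x u k * x v k - x u k - x v k + 1),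
          fun _ _ => Finset.prod_congr rfl (fun _ _ => by ring)⟩ e)
      (fun e _ => by
        induction e using Sym2.ind with
        | _ a b => simp only [Sym2.lift_mk]; exact edgeProd_nonneg L x hx a b) hmem
    simp only [Sym2.lift_mk, edgeProd_eq_one L x hx u v heq] at this ⊢
    exact this
  calc A = A * 1 := (mul_one A).symm
    _ ≤ _ := by apply mul_le_mul_of_nonneg_left h1 hA

lemma HlexLog_nonneg (L : ℕ) (P : ℕ → ℝ) (hP : ∀ k ∈ Finset.Icc 1 L, 0 < P k)
    (x : V → ℕ → ℝ) (hx : ∀ v, ∀ k ∈ Finset.Icc 1 L, x v k = 0 ∨ x v k = 1) :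
    0 ≤ HlexLog L P x := by
  apply Finset.sum_nonneg
  intro k hk
  exact mul_nonneg (hP k hk).le (sum_binary_nonneg _ (fun v => hx v k hk))

lemma HlexLog_le (L : ℕ) (P : ℕ → ℝ) (hP : ∀ k ∈ Finset.Icc 1 L, 0 < P k)
    (x : V → ℕ → ℝ) (hx : ∀ v, ∀ k ∈ Finset.Icc 1 L, x v k = 0 ∨ x v k = 1) :
    HlexLog L P x ≤ (Fintype.card V : ℝ) * ∑ k ∈ Finset.Icc 1 L, P k := by
  rw [Finset.mul_sum]
  apply Finset.sum_le_sum
  intro k hk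
  rw [mul_comm]
  exact mul_le_mul_of_nonneg_right (sum_binary_le_card _ (fun v => hx v k hk)) (hP k hk).le

end AuxHelpers

/-- With lexicographically admissible penalties and `A > n·∑_k P_k`, every
global minimizer of the logarithmic HUBO is feasible and its index-population
vector `(s_L, …, s_1)`, with `s_k = ∑_v x_{v,k}`, is lexicographically minimal
among feasible assignments. -/
theorem log_minimizer_feasible_and_lex_minimal
    {V : Type*} [Fintype V] [DecidableEq V] [Nonempty V]
    (G : SimpleGraph V) [DecidableRel G.Adj]
    (L : ℕ) (hL : 1 ≤ L)
    (A : ℝ) (hApos : 0 < A)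
    (P : ℕ → ℝ) (hPpos : ∀ k ∈ Finset.Icc 1 L, 0 < P k)
    (hadm : ∀ k ∈ Finset.Icc 1 (L - 1),
      (Fintype.card V : ℝ) * ∑ j ∈ Finset.Icc 1 k, P j < P (k + 1))
    (hA : (Fintype.card V : ℝ) * ∑ k ∈ Finset.Icc 1 L, P k < A)
    (hfeas : ∃ x0 : V → ℕ → ℝ,
      (∀ v, ∀ k ∈ Finset.Icc 1 L, x0 v k = 0 ∨ x0 v k = 1) ∧
      FeasibleLog G L x0)
    (x : V → ℕ → ℝ)
    (hx : ∀ v, ∀ k ∈ Finset.Icc 1 L, x v k = 0 ∨ x v k = 1)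
    (hmin : ∀ x' : V → ℕ → ℝ,
      (∀ v, ∀ k ∈ Finset.Icc 1 L, x' v k = 0 ∨ x' v k = 1) →
      HMGClog G L A P x ≤ HMGClog G L A P x') :
    FeasibleLog G L x ∧
    ¬ ∃ x' : V → ℕ → ℝ,
        (∀ v, ∀ k ∈ Finset.Icc 1 L, x' v k = 0 ∨ x' v k = 1) ∧
        FeasibleLog G L x' ∧
        ∃ t ∈ Finset.Icc 1 L,
          (∑ v : V, x' v t) < (∑ v : V, x v t) ∧
          ∀ j ∈ Finset.Icc 1 L, t < j → (∑ v : V, x' v j) = (∑ v : V, x v j) := by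
  obtain ⟨x0, hx0bin, hx0feas⟩ := hfeas
  have hHx0 : HMGClog G L A P x0 < A := by
    unfold HMGClog
    rw [HadjLog_eq_zero_of_feasible G L A x0 hx0bin hx0feas, zero_add]
    exact lt_of_le_of_lt (HlexLog_le L P hPpos x0 hx0bin) hA
  have hxA : HMGClog G L A P x < A := lt_of_le_of_lt (hmin x0 hx0bin) hHx0
  have hfx : FeasibleLog G L x := by
    by_contra hc
    unfold FeasibleLog at hc
    push_neg at hc
    obtain ⟨u, v, huv, heq⟩ := hc
    have h1 : A ≤ HadjLog G L A x :=
      HadjLog_ge_of_infeasible G L A hApos.le x hx u v huv heq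
    have h2 : 0 ≤ HlexLog L P x := HlexLog_nonneg L P hPpos x hx
    have : A ≤ HMGClog G L A P x := by unfold HMGClog; linarith
    linarith
  refine ⟨hfx, ?_⟩
  rintro ⟨x', hx'bin, hx'feas, t, ht, hlt, heqj⟩
  obtain ⟨ht1, htL⟩ := Finset.mem_Icc.mp ht
  -- both are feasible, so the adjacency terms vanish
  have hHx : HMGClog G L A P x = HlexLog L P x := by
    unfold HMGClog
    rw [HadjLog_eq_zero_of_feasible G L A x hx hfx, zero_add]
  have hHx' : HMGClog G L A P x' = HlexLog L P x' := by
    unfold HMGClog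
    rw [HadjLog_eq_zero_of_feasible G L A x' hx'bin hx'feas, zero_add]
  have hle : HlexLog L P x ≤ HlexLog L P x' := by
    have := hmin x' hx'bin
    rwa [hHx, hHx'] at this
  -- show HlexLog L P x' < HlexLog L P x, a contradiction
  have key : (Fintype.card V : ℝ) * ∑ j ∈ Finset.Icc 1 (t-1), P j < P t := by
    rcases Nat.lt_or_ge t 2 with h2 | h2
    · have : t = 1 := by omega
      subst this
      simpa using hPpos 1 (Finset.mem_Icc.mpr ⟨le_refl 1, hL⟩)
    · have hmem : t - 1 ∈ Finset.Icc 1 (L - 1) := Finset.mem_Icc.mpr ⟨by omega, by omega⟩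
      have := hadm (t - 1) hmem
      rwa [show t - 1 + 1 = t by omega] at this
  have hstep : HlexLog L P x' < HlexLog L P x := by
    unfold HlexLog
    rw [sum_Icc_split t L htL (fun k => P k * ∑ v : V, x' v k),
        sum_Icc_split t L htL (fun k => P k * ∑ v : V, x v k)]
    have htail : ∑ k ∈ Ioc t L, P k * ∑ v : V, x' v k
        = ∑ k ∈ Ioc t L, P k * ∑ v : V, x v k := by
      apply Finset.sum_congr rfl
      intro j hj
      obtain ⟨hj1, hj2⟩ := Finset.mem_Ioc.mp hj
      rw [heqj j (Finset.mem_Icc.mpr ⟨by omega, hj2⟩) hj1]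
    rw [htail]
    have hhead : ∑ k ∈ Icc 1 t, P k * ∑ v : V, x' v k
        < ∑ k ∈ Icc 1 t, P k * ∑ v : V, x v k := by
      rw [sum_Icc_top t ht1 (fun k => P k * ∑ v : V, x' v k),
          sum_Icc_top t ht1 (fun k => P k * ∑ v : V, x v k)]
      have hPt : 0 < P t := hPpos t ht
      have hlast : P t * ∑ v : V, x' v t ≤ P t * (∑ v : V, x v t) - P t := by
        have := binary_sum_lt (fun v => x' v t) (fun v => x v t)
          (fun v => hx'bin v t ht) (fun v => hx v t ht) hlt
        nlinarith
      have hlow' : ∑ k ∈ Icc 1 (t-1), P k * ∑ v : V, x' v k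
          ≤ (Fintype.card V : ℝ) * ∑ j ∈ Finset.Icc 1 (t-1), P j := by
        rw [Finset.mul_sum]
        apply Finset.sum_le_sum
        intro k hk
        obtain ⟨hk1, hk2⟩ := Finset.mem_Icc.mp hk
        have hkL : k ∈ Finset.Icc 1 L := Finset.mem_Icc.mpr ⟨hk1, by omega⟩
        rw [mul_comm ((Fintype.card V : ℝ)) (P k)]
        exact mul_le_mul_of_nonneg_left
          (sum_binary_le_card _ (fun v => hx'bin v k hkL)) (hPpos k hkL).le
      have hlow : 0 ≤ ∑ k ∈ Icc 1 (t-1), P k * ∑ v : V, x v k := by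
        apply Finset.sum_nonneg
        intro k hk
        obtain ⟨hk1, hk2⟩ := Finset.mem_Icc.mp hk
        have hkL : k ∈ Finset.Icc 1 L := Finset.mem_Icc.mpr ⟨hk1, by omega⟩
        exact mul_nonneg (hPpos k hkL).le
          (sum_binary_nonneg _ (fun v => hx v k hkL))
      linarith
    linarith
  linarith
end
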